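/- For any distribution ρ of K-class classifiers, the expected tandem loss satisfies E_{ρ²}[L(h,h')] ≤ (2(K-1)/K)·(E_ρ[L(h)] − (1/2)·E_{ρ²}[D(h,h')]). -/

import Mathlib

open MeasureTheory

lemma swap_toReal_integral {α β : Type*} [MeasurableSpace α] [MeasurableSpace β]
    (μ : Measure α) (ν : Measure β) [IsFiniteMeasure μ] [IsFiniteMeasure ν]
    {s : Set (α × β)} (hs : MeasurableSet s) :
    ∫ x, (ν (Prod.mk x ⁻¹' s)).toReal ∂μ = ∫ y, (μ ((fun x => (x, y)) ⁻¹' s)).toReal ∂ν := by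
  rw [integral_toReal (measurable_measure_prodMk_left hs).aemeasurable
      (ae_of_all _ fun x => lt_of_le_of_lt (measure_mono (Set.subset_univ _)) (measure_lt_top ν _)),
    integral_toReal (measurable_measure_prodMk_right hs).aemeasurable
      (ae_of_all _ fun y => lt_of_le_of_lt (measure_mono (Set.subset_univ _)) (measure_lt_top μ _)),
    ← Measure.prod_apply hs, ← Measure.prod_apply_symm hs]

lemma key_ineq (K : ℕ) (hK : 1 ≤ K) (q : Fin K → ℝ) (hq : ∀ i, 0 ≤ q i)
    (hsum : ∑ i, q i = 1) (y : Fin K) :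
    (1 - q y) ^ 2 ≤
      2 * ((K : ℝ) - 1) / K * ((1 - q y) - 1 / 2 * (1 - ∑ i, q i ^ 2)) := by
  rcases eq_or_lt_of_le hK with hK1 | hK2
  · -- K = 1
    subst hK1
    have hy : q y = 1 := by
      have h0 : y = 0 := Subsingleton.elim y 0
      simpa [Fin.sum_univ_one, h0] using hsum
    norm_num [hy]
  · have hKR : (2 : ℝ) ≤ (K : ℝ) := by exact_mod_cast hK2
    set s := Finset.univ.erase y with hs
    have hcard : (s.card : ℝ) = (K : ℝ) - 1 := by
      rw [hs, Finset.card_erase_of_mem (Finset.mem_univ y)]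
      simp [Nat.cast_sub hK]
    have ha : ∑ i ∈ s, q i = 1 - q y := by
      have := Finset.add_sum_erase Finset.univ q (Finset.mem_univ y)
      linarith [hsum, this]
    have ht : ∑ i, q i ^ 2 = q y ^ 2 + ∑ i ∈ s, q i ^ 2 :=
      (Finset.add_sum_erase Finset.univ (fun i => q i ^ 2) (Finset.mem_univ y)).symm
    have hcs : (∑ i ∈ s, q i) ^ 2 ≤ (s.card : ℝ) * ∑ i ∈ s, q i ^ 2 :=
      sq_sum_le_card_mul_sum_sq
    rw [ha, hcard] at hcs
    rw [ht, div_mul_eq_mul_div, le_div_iff₀ (by positivity : (0:ℝ) < (K:ℝ))]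
    nlinarith [hcs, sq_nonneg (1 - q y)]

lemma prob_toReal_le_one {α : Type*} [MeasurableSpace α] (ν : Measure α)
    [IsProbabilityMeasure ν] (s : Set α) : (ν s).toReal ≤ 1 := by
  rw [← ENNReal.toReal_one]
  exact ENNReal.toReal_mono ENNReal.one_ne_top prob_le_one

theorem kclass_tandem_bound {Ω H X : Type*} [MeasurableSpace Ω] [MeasurableSpace H]
    (K : ℕ) (hK : 1 ≤ K)
    (μ : Measure Ω) [IsProbabilityMeasure μ] (ρ : Measure H) [IsProbabilityMeasure ρ]
    (h : H → X → Fin K) (ptX : Ω → X) (ptY : Ω → Fin K)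
    (hjm : MeasurableSet {q : H × Ω | h q.1 (ptX q.2) ≠ ptY q.2})
    (hjm' : MeasurableSet {q : (H × H) × Ω | h q.1.1 (ptX q.2) ≠ h q.1.2 (ptX q.2)}) :
    ∫ p, (μ {ω | h p.1 (ptX ω) ≠ ptY ω ∧ h p.2 (ptX ω) ≠ ptY ω}).toReal ∂(ρ.prod ρ) ≤
      2 * ((K : ℝ) - 1) / K *
        ((∫ c, (μ {ω | h c (ptX ω) ≠ ptY ω}).toReal ∂ρ) -
          (1 / 2) * ∫ p, (μ {ω | h p.1 (ptX ω) ≠ h p.2 (ptX ω)}).toReal ∂(ρ.prod ρ)) := by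
  classical
  set T₁ : Set ((H × H) × Ω) :=
    {q | h q.1.1 (ptX q.2) ≠ ptY q.2 ∧ h q.1.2 (ptX q.2) ≠ ptY q.2} with hT₁def
  set T₂ : Set (H × Ω) := {q | h q.1 (ptX q.2) ≠ ptY q.2} with hT₂def
  set T₃ : Set ((H × H) × Ω) := {q | h q.1.1 (ptX q.2) ≠ h q.1.2 (ptX q.2)} with hT₃def
  have hT₁ : MeasurableSet T₁ := by
    have m1 : Measurable (fun q : (H × H) × Ω => (q.1.1, q.2)) :=
      (measurable_fst.comp measurable_fst).prodMk measurable_snd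
    have m2 : Measurable (fun q : (H × H) × Ω => (q.1.2, q.2)) :=
      (measurable_snd.comp measurable_fst).prodMk measurable_snd
    exact (hjm.preimage m1).inter (hjm.preimage m2)
  have hT₂ : MeasurableSet T₂ := hjm
  have hT₃ : MeasurableSet T₃ := hjm'
  set F₁ : Ω → ℝ := fun ω => (ρ.prod ρ ((fun p => (p, ω)) ⁻¹' T₁)).toReal with hF₁def
  set F₂ : Ω → ℝ := fun ω => (ρ ((fun c => (c, ω)) ⁻¹' T₂)).toReal with hF₂def
  set F₃ : Ω → ℝ := fun ω => (ρ.prod ρ ((fun p => (p, ω)) ⁻¹' T₃)).toReal with hF₃def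
  -- Fubini swaps
  have e1 : (∫ p, (μ {ω | h p.1 (ptX ω) ≠ ptY ω ∧ h p.2 (ptX ω) ≠ ptY ω}).toReal
      ∂(ρ.prod ρ)) = ∫ ω, F₁ ω ∂μ := swap_toReal_integral (ρ.prod ρ) μ hT₁
  have e2 : (∫ c, (μ {ω | h c (ptX ω) ≠ ptY ω}).toReal ∂ρ) = ∫ ω, F₂ ω ∂μ :=
    swap_toReal_integral ρ μ hT₂
  have e3 : (∫ p, (μ {ω | h p.1 (ptX ω) ≠ h p.2 (ptX ω)}).toReal ∂(ρ.prod ρ))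
      = ∫ ω, F₃ ω ∂μ := swap_toReal_integral (ρ.prod ρ) μ hT₃
  -- integrability
  have intF : ∀ {β : Type} ⦃G : Ω → ℝ⦄, Measurable G → (∀ ω, 0 ≤ G ω) → (∀ ω, G ω ≤ 1) →
      Integrable G μ := by
    intro β G hm h0 h1
    refine Integrable.mono' (integrable_const (1 : ℝ)) hm.aestronglyMeasurable
      (ae_of_all _ fun ω => ?_)
    rw [Real.norm_eq_abs, abs_of_nonneg (h0 ω)]
    exact h1 ω
  have intF₁ : Integrable F₁ μ :=
    intF (β := Unit) ((measurable_measure_prodMk_right hT₁).ennreal_toReal)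
      (fun ω => ENNReal.toReal_nonneg) (fun ω => by simp only [hF₁def]; exact prob_toReal_le_one (ρ.prod ρ) _)
  have intF₂ : Integrable F₂ μ :=
    intF (β := Unit) ((measurable_measure_prodMk_right hT₂).ennreal_toReal)
      (fun ω => ENNReal.toReal_nonneg) (fun ω => by simp only [hF₂def]; exact prob_toReal_le_one ρ _)
  have intF₃ : Integrable F₃ μ :=
    intF (β := Unit) ((measurable_measure_prodMk_right hT₃).ennreal_toReal)
      (fun ω => ENNReal.toReal_nonneg) (fun ω => by simp only [hF₃def]; exact prob_toReal_le_one (ρ.prod ρ) _)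
  -- pointwise inequality
  have hpt : ∀ ω, F₁ ω ≤ 2 * ((K : ℝ) - 1) / K * (F₂ ω - 1 / 2 * F₃ ω) := by
    intro ω
    set x := ptX ω with hx
    set y := ptY ω with hy
    have hS : MeasurableSet {p : H × H | h p.1 x ≠ h p.2 x} :=
      hjm'.preimage (measurable_id.prodMk measurable_const)
    have hA : ∀ i : Fin K, MeasurableSet {c : H | h c x = i} := by
      intro i
      by_cases hex : ∃ c₀, h c₀ x = i
      · obtain ⟨c₀, hc₀⟩ := hex
        have heq : {c : H | h c x = i}
            = (fun c => (c, c₀)) ⁻¹' {p : H × H | h p.1 x ≠ h p.2 x}ᶜ := by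
          ext c
          simp [hc₀]
        rw [heq]
        exact hS.compl.preimage (measurable_id.prodMk measurable_const)
      · have heq : {c : H | h c x = i} = ∅ := by
          ext c
          simp only [Set.mem_setOf_eq, Set.mem_empty_iff_false, iff_false]
          exact fun hc => hex ⟨c, hc⟩
        rw [heq]; exact MeasurableSet.empty
    have hdisj : Pairwise (Function.onFun Disjoint fun i => {c : H | h c x = i}) := by
      intro i j hij
      simp only [Function.onFun, Set.disjoint_left, Set.mem_setOf_eq]
      intro c hc hc'
      exact hij (hc ▸ hc' ▸ rfl)
    set q : Fin K → ℝ := fun i => (ρ {c : H | h c x = i}).toReal with hq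
    have hqnn : ∀ i, 0 ≤ q i := fun i => ENNReal.toReal_nonneg
    have hcover : (⋃ i, {c : H | h c x = i}) = Set.univ := by
      ext c; simp
    have htsum : ∑ i, ρ {c : H | h c x = i} = 1 := by
      rw [← tsum_fintype (L := SummationFilter.unconditional _), ← measure_iUnion hdisj hA, hcover, measure_univ]
    have hsum : ∑ i, q i = 1 := by
      rw [hq, ← ENNReal.toReal_sum (fun i _ => measure_ne_top _ _), htsum,
        ENNReal.toReal_one]
    -- F₂
    have hF₂ω : F₂ ω = 1 - q y := by
      show (ρ {c : H | h c x ≠ y}).toReal = 1 - q y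
      have : {c : H | h c x ≠ y} = {c : H | h c x = y}ᶜ := rfl
      rw [this, measure_compl (hA y) (measure_ne_top _ _), measure_univ,
        ENNReal.toReal_sub_of_le prob_le_one ENNReal.one_ne_top, ENNReal.toReal_one]
    -- F₁
    have hF₁ω : F₁ ω = (1 - q y) ^ 2 := by
      show (ρ.prod ρ ((fun p : H × H => (p, ω)) ⁻¹' T₁)).toReal = _
      have hset : ((fun p : H × H => (p, ω)) ⁻¹' T₁)
          = {c : H | h c x ≠ y} ×ˢ {c : H | h c x ≠ y} := rfl
      rw [hset, Measure.prod_prod, ENNReal.toReal_mul]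
      have : (ρ {c : H | h c x ≠ y}).toReal = 1 - q y := hF₂ω
      rw [this]; ring
    -- F₃
    have hF₃ω : F₃ ω = 1 - ∑ i, q i ^ 2 := by
      show (ρ.prod ρ ((fun p : H × H => (p, ω)) ⁻¹' T₃)).toReal = _
      have hset : ((fun p : H × H => (p, ω)) ⁻¹' T₃) = {p : H × H | h p.1 x ≠ h p.2 x} := rfl
      rw [hset]
      have hc : {p : H × H | h p.1 x ≠ h p.2 x}ᶜ
          = ⋃ i, ({c : H | h c x = i} ×ˢ {c : H | h c x = i}) := by
        ext p
        simp only [Set.mem_compl_iff, Set.mem_setOf_eq, not_not, Set.mem_iUnion,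
          Set.mem_prod]
        exact ⟨fun hh => ⟨h p.2 x, hh, rfl⟩, fun ⟨i, hi, hj⟩ => hi.trans hj.symm⟩
      have hcompl : ρ.prod ρ {p : H × H | h p.1 x ≠ h p.2 x}ᶜ
          = ∑ i, ρ {c : H | h c x = i} * ρ {c : H | h c x = i} := by
        rw [hc, measure_iUnion ?_ (fun i => (hA i).prod (hA i)), tsum_fintype]
        · simp [Measure.prod_prod]
        · intro i j hij
          exact Set.disjoint_prod.mpr (Or.inl (hdisj hij))
      have h2 : ρ.prod ρ {p : H × H | h p.1 x ≠ h p.2 x}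
          = 1 - ∑ i, ρ {c : H | h c x = i} * ρ {c : H | h c x = i} := by
        have hcc := prob_compl_eq_one_sub (μ := ρ.prod ρ) hS.compl
        rw [compl_compl] at hcc
        rw [hcc, hcompl]
      rw [h2, ENNReal.toReal_sub_of_le ?hle ENNReal.one_ne_top, ENNReal.toReal_one,
        ENNReal.toReal_sum (fun i _ => ENNReal.mul_ne_top (measure_ne_top _ _)
          (measure_ne_top _ _))]
      · simp [ENNReal.toReal_mul, sq, hq]
      case hle =>
        rw [← hcompl]
        exact prob_le_one
    rw [hF₁ω, hF₂ω, hF₃ω]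
    exact key_ineq K hK q hqnn hsum y
  rw [e1, e2, e3]
  calc ∫ ω, F₁ ω ∂μ
      ≤ ∫ ω, 2 * ((K : ℝ) - 1) / K * (F₂ ω - 1 / 2 * F₃ ω) ∂μ :=
        integral_mono intF₁ (((intF₂.sub (intF₃.const_mul _)).const_mul _)) hpt
    _ = 2 * ((K : ℝ) - 1) / K * ((∫ ω, F₂ ω ∂μ) - 1 / 2 * ∫ ω, F₃ ω ∂μ) := by
        rw [integral_const_mul, integral_sub intF₂ (intF₃.const_mul _), integral_const_mul]
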